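/- Any 2-fold bracket {{−,−}} on the free algebra R_ℓ is given by the master formula: for all f,g ∈ R_ℓ, {{f,g}} = Σ_{i,j=1}^{ℓ} (∂g/∂x_j) • {{x_i, x_j}} • ((∂f/∂x_i))^σ, where • is the associative product (u⊗v)•(x⊗y) = (ux)⊗(yv) on R_ℓ⊗R_ℓ and (u⊗v)^σ = v⊗u. -/

import Mathlib

open TensorProduct LinearMap

section DPA

variable (𝔽 : Type) [Field 𝔽] (V : Type) [Ring V] [Algebra 𝔽 V]

/-- The swap `(u ⊗ v)^σ = v ⊗ u` on `V ⊗ V`. -/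
noncomputable abbrev swap2 : V ⊗[𝔽] V ≃ₗ[𝔽] V ⊗[𝔽] V := TensorProduct.comm 𝔽 V V

/-- The cyclic permutation `(u ⊗ v ⊗ w)^σ = w ⊗ u ⊗ v` on `V ⊗ V ⊗ V = (V ⊗ V) ⊗ V`. -/
noncomputable def sigma3 : (V ⊗[𝔽] V) ⊗[𝔽] V ≃ₗ[𝔽] (V ⊗[𝔽] V) ⊗[𝔽] V :=
  (TensorProduct.comm 𝔽 (V ⊗[𝔽] V) V).trans (TensorProduct.assoc 𝔽 V V V).symm

/-- Left multiplication `a · (u ⊗ v) = (a*u) ⊗ v` (outer bimodule structure). -/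
noncomputable def lact2 (a : V) : V ⊗[𝔽] V →ₗ[𝔽] V ⊗[𝔽] V :=
  LinearMap.rTensor V (LinearMap.mulLeft 𝔽 a)

/-- Right multiplication `(u ⊗ v) · c = u ⊗ (v*c)` (outer bimodule structure). -/
noncomputable def ract2 (c : V) : V ⊗[𝔽] V →ₗ[𝔽] V ⊗[𝔽] V :=
  LinearMap.lTensor V (LinearMap.mulRight 𝔽 c)

/-- `(u ⊗ v) ⋆₁ b = (u*b) ⊗ v`. -/
noncomputable def star1r (b : V) : V ⊗[𝔽] V →ₗ[𝔽] V ⊗[𝔽] V :=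
  LinearMap.rTensor V (LinearMap.mulRight 𝔽 b)

/-- `a ⋆₁ (u ⊗ v) = u ⊗ (a*v)`. -/
noncomputable def star1l (a : V) : V ⊗[𝔽] V →ₗ[𝔽] V ⊗[𝔽] V :=
  LinearMap.lTensor V (LinearMap.mulLeft 𝔽 a)

/-- The `•`-product on `V ⊗ V`:  `(u ⊗ v) • (x ⊗ y) = (u*x) ⊗ (y*v)`
(the multiplication of `V ⊗ Vᵒᵖ`). -/
noncomputable def bullet : V ⊗[𝔽] V →ₗ[𝔽] V ⊗[𝔽] V →ₗ[𝔽] V ⊗[𝔽] V :=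
  TensorProduct.lift
    (((TensorProduct.mapBilinear (σ₁₂ := RingHom.id 𝔽) (M := V) (N := V) (M₂ := V) (N₂ := V)).comp (LinearMap.mul 𝔽 V)).compl₂
      ((LinearMap.mul 𝔽 V).flip))

/-- A `2`-fold bracket on `V`: an `𝔽`-bilinear map `V × V → V ⊗ V` satisfying the two
Leibniz rules `{{a,bc}} = {{a,b}}·c + b·{{a,c}}` and `{{ab,c}} = {{a,c}} ⋆₁ b + a ⋆₁ {{b,c}}`. -/
def IsDoubleBracket (Br : V →ₗ[𝔽] V →ₗ[𝔽] V ⊗[𝔽] V) : Prop :=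
  (∀ a b c : V, Br a (b * c) = ract2 𝔽 V c (Br a b) + lact2 𝔽 V b (Br a c)) ∧
  (∀ a b c : V, Br (a * b) c = star1r 𝔽 V b (Br a c) + star1l 𝔽 V a (Br b c))

variable {𝔽 V}

/-- `{{a, B}}_L` : apply the bracket to the first tensor factor. -/
noncomputable def brL (Br : V →ₗ[𝔽] V →ₗ[𝔽] V ⊗[𝔽] V) (a : V) :
    V ⊗[𝔽] V →ₗ[𝔽] (V ⊗[𝔽] V) ⊗[𝔽] V :=
  LinearMap.rTensor V (Br a)

/-- `{{a, B}}_R` : apply the bracket to the second tensor factor. -/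
noncomputable def brR (Br : V →ₗ[𝔽] V →ₗ[𝔽] V ⊗[𝔽] V) (a : V) :
    V ⊗[𝔽] V →ₗ[𝔽] (V ⊗[𝔽] V) ⊗[𝔽] V :=
  (TensorProduct.assoc 𝔽 V V V).symm.toLinearMap ∘ₗ LinearMap.lTensor V (Br a)

variable (𝔽 V)

/-- `ρ₂` : swap the last two tensor factors of `V ⊗ V ⊗ V`. -/
noncomputable def rho2 : (V ⊗[𝔽] V) ⊗[𝔽] V ≃ₗ[𝔽] (V ⊗[𝔽] V) ⊗[𝔽] V :=
  (TensorProduct.assoc 𝔽 V V V).trans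
    ((TensorProduct.congr (LinearEquiv.refl 𝔽 V) (TensorProduct.comm 𝔽 V V)).trans
      (TensorProduct.assoc 𝔽 V V V).symm)

variable {𝔽 V}

/-- Conjugated bullet action used to define the actions `•ᵢ` of `V ⊗ V` on `V ⊗ V ⊗ V`. -/
noncomputable def conjAct (β : V ⊗[𝔽] V →ₗ[𝔽] V ⊗[𝔽] V →ₗ[𝔽] V ⊗[𝔽] V)
    (ρ : (V ⊗[𝔽] V) ⊗[𝔽] V ≃ₗ[𝔽] (V ⊗[𝔽] V) ⊗[𝔽] V) :
    V ⊗[𝔽] V →ₗ[𝔽] (V ⊗[𝔽] V) ⊗[𝔽] V →ₗ[𝔽] (V ⊗[𝔽] V) ⊗[𝔽] V :=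
  (LinearMap.lcomp 𝔽 _ ρ.toLinearMap) ∘ₗ
    (LinearMap.llcomp 𝔽 ((V ⊗[𝔽] V) ⊗[𝔽] V) ((V ⊗[𝔽] V) ⊗[𝔽] V) ((V ⊗[𝔽] V) ⊗[𝔽] V)
      ρ.symm.toLinearMap) ∘ₗ
    (LinearMap.rTensorHom V) ∘ₗ β

variable (𝔽 V)

/-- The right action `X •₁ A`, i.e. `(x⊗y⊗z) •₁ (a⊗b) = x⊗(y*a)⊗(b*z)`;
`bAct1R A X = X •₁ A`. -/
noncomputable def bAct1R : V ⊗[𝔽] V →ₗ[𝔽] (V ⊗[𝔽] V) ⊗[𝔽] V →ₗ[𝔽] (V ⊗[𝔽] V) ⊗[𝔽] V :=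
  conjAct (bullet 𝔽 V).flip ((sigma3 𝔽 V).trans (sigma3 𝔽 V))

/-- The left action `A •₂ X`, i.e. `(a⊗b) •₂ (x⊗y⊗z) = (a*x)⊗y⊗(z*b)`. -/
noncomputable def bAct2L : V ⊗[𝔽] V →ₗ[𝔽] (V ⊗[𝔽] V) ⊗[𝔽] V →ₗ[𝔽] (V ⊗[𝔽] V) ⊗[𝔽] V :=
  conjAct (bullet 𝔽 V) (rho2 𝔽 V)

/-- The right action `X •₃ A`, i.e. `(x⊗y⊗z) •₃ (a⊗b) = (x*a)⊗(b*y)⊗z`;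
`bAct3R A X = X •₃ A`. -/
noncomputable def bAct3R : V ⊗[𝔽] V →ₗ[𝔽] (V ⊗[𝔽] V) ⊗[𝔽] V →ₗ[𝔽] (V ⊗[𝔽] V) ⊗[𝔽] V :=
  conjAct (bullet 𝔽 V).flip (LinearEquiv.refl 𝔽 ((V ⊗[𝔽] V) ⊗[𝔽] V))

/-- `a ⋆₁ (x⊗y⊗z) = x⊗(a*y)⊗z`. -/
noncomputable def slot2L (a : V) : (V ⊗[𝔽] V) ⊗[𝔽] V →ₗ[𝔽] (V ⊗[𝔽] V) ⊗[𝔽] V :=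
  LinearMap.rTensor V (LinearMap.lTensor V (LinearMap.mulLeft 𝔽 a))

/-- `(x⊗y⊗z) ⋆₁ b = x⊗(y*b)⊗z`. -/
noncomputable def slot2R (b : V) : (V ⊗[𝔽] V) ⊗[𝔽] V →ₗ[𝔽] (V ⊗[𝔽] V) ⊗[𝔽] V :=
  LinearMap.rTensor V (LinearMap.lTensor V (LinearMap.mulRight 𝔽 b))

/-- `a ⋆₂ (x⊗y⊗z) = x⊗y⊗(a*z)`. -/
noncomputable def slot3L (a : V) : (V ⊗[𝔽] V) ⊗[𝔽] V →ₗ[𝔽] (V ⊗[𝔽] V) ⊗[𝔽] V :=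
  LinearMap.lTensor (V ⊗[𝔽] V) (LinearMap.mulLeft 𝔽 a)

/-- `(x⊗y⊗z) ⋆₂ b = (x*b)⊗y⊗z`. -/
noncomputable def slot1R (b : V) : (V ⊗[𝔽] V) ⊗[𝔽] V →ₗ[𝔽] (V ⊗[𝔽] V) ⊗[𝔽] V :=
  LinearMap.rTensor V (LinearMap.rTensor V (LinearMap.mulRight 𝔽 b))

/-- outer left: `a · (x⊗y⊗z) = (a*x)⊗y⊗z`. -/
noncomputable def slot1L (a : V) : (V ⊗[𝔽] V) ⊗[𝔽] V →ₗ[𝔽] (V ⊗[𝔽] V) ⊗[𝔽] V :=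
  LinearMap.rTensor V (LinearMap.rTensor V (LinearMap.mulLeft 𝔽 a))

/-- outer right: `(x⊗y⊗z) · b = x⊗y⊗(z*b)`. -/
noncomputable def slot3R (b : V) : (V ⊗[𝔽] V) ⊗[𝔽] V →ₗ[𝔽] (V ⊗[𝔽] V) ⊗[𝔽] V :=
  LinearMap.lTensor (V ⊗[𝔽] V) (LinearMap.mulRight 𝔽 b)

variable {𝔽 V}

/-- The triple bracket `{{a,b,c}}`. -/
noncomputable def triple (Br : V →ₗ[𝔽] V →ₗ[𝔽] V ⊗[𝔽] V) (a b c : V) :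
    (V ⊗[𝔽] V) ⊗[𝔽] V :=
  brL Br a (Br b c) + sigma3 𝔽 V (brL Br b (Br c a)) +
    sigma3 𝔽 V (sigma3 𝔽 V (brL Br c (Br a b)))

variable (𝔽 V)

/-- Skewsymmetry of a 2-fold bracket. -/
def IsSkew (Br : V →ₗ[𝔽] V →ₗ[𝔽] V ⊗[𝔽] V) : Prop :=
  ∀ a b : V, Br a b = - swap2 𝔽 V (Br b a)

/-- The span of commutators `[V,V]`. -/
def commSub : Submodule 𝔽 V := Submodule.span 𝔽 {x : V | ∃ a b : V, x = a * b - b * a}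

variable {𝔽 V}

/-- The associated bracket `{a,b} = m {{a,b}}`. -/
noncomputable def sb (Br : V →ₗ[𝔽] V →ₗ[𝔽] V ⊗[𝔽] V) (a b : V) : V :=
  LinearMap.mul' 𝔽 V (Br a b)

/-- A 2-fold derivation: `D(ab) = (Da)·b + a·(Db)`. -/
def Is2Deriv (D : V →ₗ[𝔽] V ⊗[𝔽] V) : Prop :=
  ∀ a b : V, D (a * b) = ract2 𝔽 V b (D a) + lact2 𝔽 V a (D b)

/-- `D` and `E` strongly commute: `D_L ∘ E = E_R ∘ D`. -/
def StronglyComm (D E : V →ₗ[𝔽] V ⊗[𝔽] V) : Prop :=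
  ∀ f : V, LinearMap.rTensor V D (E f) =
    (TensorProduct.assoc 𝔽 V V V).symm (LinearMap.lTensor V E (D f))

end DPA

/-! The right-hand side of the master formula is itself a double bracket: the outer actions
and `⋆₁` are `•`-multiplications by `1 ⊗ c`, `a ⊗ 1`, `b ⊗ 1`, `1 ⊗ a`, the product `•` is
associative and `σ` reverses it, so the Leibniz rules of the `∂/∂xᵢ` propagate to both Leibniz
rules of the formula. Since `∂xₖ/∂xᵢ = δᵢₖ (1 ⊗ 1)`, it agrees with `{{-,-}}` on pairs of
generators. On a free algebra a linear map obeying a Leibniz rule is determined by its values on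
generators; applied first in the second and then in the first argument, this makes the two
brackets equal. -/

theorem FreeAlgebra.linearMap_eq_of_leibniz {R X M : Type*} [CommSemiring R] [AddCommGroup M]
    [Module R M] {s t : FreeAlgebra R X → M → M} (hs : ∀ m, s 1 m = m) (ht : ∀ m, t 1 m = m)
    {P Q : FreeAlgebra R X →ₗ[R] M}
    (hP : ∀ a b, P (a * b) = s b (P a) + t a (P b))
    (hQ : ∀ a b, Q (a * b) = s b (Q a) + t a (Q b))
    (hι : ∀ x, P (FreeAlgebra.ι R x) = Q (FreeAlgebra.ι R x)) : P = Q := by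
  have map_one_eq_zero : ∀ F : FreeAlgebra R X →ₗ[R] M,
      (∀ a b, F (a * b) = s b (F a) + t a (F b)) → F 1 = 0 := fun F hF =>
    left_eq_add.mp (by simpa only [mul_one, hs, ht] using hF 1 1)
  ext a
  induction a using FreeAlgebra.induction with
  | grade0 r =>
    simp only [Algebra.algebraMap_eq_smul_one, map_smul, map_one_eq_zero P hP,
      map_one_eq_zero Q hQ]
  | grade1 x => exact hι x
  | mul a b ha hb => rw [hP, hQ, ha, hb]
  | add a b ha hb => rw [map_add, map_add, ha, hb]

section DoubleBracket

variable {𝔽 : Type} [Field 𝔽] {V : Type} [Ring V] [Algebra 𝔽 V]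

@[simp]
lemma bullet_tmul (u v x y : V) : bullet 𝔽 V (u ⊗ₜ v) (x ⊗ₜ y) = (u * x) ⊗ₜ (y * v) := by
  simp [bullet]

lemma bullet_assoc (A B C : V ⊗[𝔽] V) :
    bullet 𝔽 V (bullet 𝔽 V A B) C = bullet 𝔽 V A (bullet 𝔽 V B C) := by
  induction A using TensorProduct.induction_on with
  | zero => simp
  | add A A' hA hA' => simp [hA, hA']
  | tmul u v =>
    induction B using TensorProduct.induction_on with
    | zero => simp
    | add B B' hB hB' => simp [hB, hB']
    | tmul x y =>
      induction C using TensorProduct.induction_on with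
      | zero => simp
      | add C C' hC hC' => rw [map_add, map_add, map_add, hC, hC']
      | tmul p q => simp [mul_assoc]

lemma bullet_one_left (X : V ⊗[𝔽] V) : bullet 𝔽 V (1 ⊗ₜ 1) X = X := by
  induction X using TensorProduct.induction_on with
  | zero => simp
  | tmul x y => simp
  | add X Y hX hY => simp [hX, hY]

lemma bullet_one_right (X : V ⊗[𝔽] V) : bullet 𝔽 V X (1 ⊗ₜ 1) = X := by
  induction X using TensorProduct.induction_on with
  | zero => simp
  | tmul x y => simp
  | add X Y hX hY => simp [hX, hY]

lemma ract2_eq_bullet (c : V) (X : V ⊗[𝔽] V) : ract2 𝔽 V c X = bullet 𝔽 V (1 ⊗ₜ c) X := by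
  induction X using TensorProduct.induction_on with
  | zero => simp
  | tmul x y => simp [ract2]
  | add X Y hX hY => simp [hX, hY]

lemma lact2_eq_bullet (a : V) (X : V ⊗[𝔽] V) : lact2 𝔽 V a X = bullet 𝔽 V (a ⊗ₜ 1) X := by
  induction X using TensorProduct.induction_on with
  | zero => simp
  | tmul x y => simp [lact2]
  | add X Y hX hY => simp [hX, hY]

lemma star1r_eq_bullet (b : V) (X : V ⊗[𝔽] V) : star1r 𝔽 V b X = bullet 𝔽 V X (b ⊗ₜ 1) := by
  induction X using TensorProduct.induction_on with
  | zero => simp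
  | tmul x y => simp [star1r]
  | add X Y hX hY => simp [hX, hY]

lemma star1l_eq_bullet (a : V) (X : V ⊗[𝔽] V) : star1l 𝔽 V a X = bullet 𝔽 V X (1 ⊗ₜ a) := by
  induction X using TensorProduct.induction_on with
  | zero => simp
  | tmul x y => simp [star1l]
  | add X Y hX hY => simp [hX, hY]

lemma swap2_bullet (X Y : V ⊗[𝔽] V) :
    swap2 𝔽 V (bullet 𝔽 V X Y) = bullet 𝔽 V (swap2 𝔽 V Y) (swap2 𝔽 V X) := by
  induction X using TensorProduct.induction_on with
  | zero => simp
  | add X X' hX hX' => simp only [map_add, LinearMap.add_apply, hX, hX']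
  | tmul u v =>
    induction Y using TensorProduct.induction_on with
    | zero => simp
    | add Y Y' hY hY' => simp only [map_add, LinearMap.add_apply, hY, hY']
    | tmul x y => simp

lemma ract2_one (X : V ⊗[𝔽] V) : ract2 𝔽 V 1 X = X := by simp [ract2]
lemma lact2_one (X : V ⊗[𝔽] V) : lact2 𝔽 V 1 X = X := by simp [lact2]
lemma star1r_one (X : V ⊗[𝔽] V) : star1r 𝔽 V 1 X = X := by simp [star1r]
lemma star1l_one (X : V ⊗[𝔽] V) : star1l 𝔽 V 1 X = X := by simp [star1l]

variable {ι : Type*} [Fintype ι]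

noncomputable def masterBracket (D : ι → V →ₗ[𝔽] V ⊗[𝔽] V) (B : ι → ι → V ⊗[𝔽] V) :
    V →ₗ[𝔽] V →ₗ[𝔽] V ⊗[𝔽] V :=
  LinearMap.mk₂ 𝔽
    (fun f g => ∑ i, ∑ j, bullet 𝔽 V (bullet 𝔽 V (D j g) (B i j)) (swap2 𝔽 V (D i f)))
    (by simp [Finset.sum_add_distrib]) (by simp [Finset.smul_sum])
    (by simp [Finset.sum_add_distrib]) (by simp [Finset.smul_sum])

@[simp]
lemma masterBracket_apply (D : ι → V →ₗ[𝔽] V ⊗[𝔽] V) (B : ι → ι → V ⊗[𝔽] V) (f g : V) :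
    masterBracket D B f g =
      ∑ i, ∑ j, bullet 𝔽 V (bullet 𝔽 V (D j g) (B i j)) (swap2 𝔽 V (D i f)) :=
  rfl

variable {D : ι → V →ₗ[𝔽] V ⊗[𝔽] V}

lemma masterBracket_mul_right (hD : ∀ i, Is2Deriv (D i)) (B : ι → ι → V ⊗[𝔽] V) (f b c : V) :
    masterBracket D B f (b * c) =
      ract2 𝔽 V c (masterBracket D B f b) + lact2 𝔽 V b (masterBracket D B f c) := by
  simp only [masterBracket_apply, hD _ b c, ract2_eq_bullet, lact2_eq_bullet, map_add,
    LinearMap.add_apply, map_sum, bullet_assoc, Finset.sum_add_distrib]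

lemma masterBracket_mul_left (hD : ∀ i, Is2Deriv (D i)) (B : ι → ι → V ⊗[𝔽] V) (a b g : V) :
    masterBracket D B (a * b) g =
      star1r 𝔽 V b (masterBracket D B a g) + star1l 𝔽 V a (masterBracket D B b g) := by
  simp only [masterBracket_apply, hD _ a b, ract2_eq_bullet, lact2_eq_bullet, star1r_eq_bullet,
    star1l_eq_bullet, swap2_bullet, TensorProduct.comm_tmul, map_add, map_sum,
    bullet_assoc, Finset.sum_add_distrib]

lemma isDoubleBracket_masterBracket (hD : ∀ i, Is2Deriv (D i)) (B : ι → ι → V ⊗[𝔽] V) :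
    IsDoubleBracket 𝔽 V (masterBracket D B) :=
  ⟨masterBracket_mul_right hD B, masterBracket_mul_left hD B⟩

lemma masterBracket_apply_apply_of_kronecker [DecidableEq ι] {x : ι → V}
    (hx : ∀ i k, D i (x k) = if i = k then 1 ⊗ₜ 1 else 0) (B : ι → ι → V ⊗[𝔽] V) (k l : ι) :
    masterBracket D B (x k) (x l) = B k l := by
  simp [hx, apply_ite, ite_apply, bullet_one_left, bullet_one_right]

theorem IsDoubleBracket.ext_freeAlgebra {X : Type} {Br Br' : FreeAlgebra 𝔽 X →ₗ[𝔽]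
      FreeAlgebra 𝔽 X →ₗ[𝔽] FreeAlgebra 𝔽 X ⊗[𝔽] FreeAlgebra 𝔽 X}
    (hBr : IsDoubleBracket 𝔽 _ Br) (hBr' : IsDoubleBracket 𝔽 _ Br')
    (h : ∀ k l, Br (FreeAlgebra.ι 𝔽 k) (FreeAlgebra.ι 𝔽 l) =
      Br' (FreeAlgebra.ι 𝔽 k) (FreeAlgebra.ι 𝔽 l)) :
    Br = Br' := by
  have on_generators : ∀ k, Br (FreeAlgebra.ι 𝔽 k) = Br' (FreeAlgebra.ι 𝔽 k) := fun k =>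
    FreeAlgebra.linearMap_eq_of_leibniz (s := fun c T => ract2 𝔽 (FreeAlgebra 𝔽 X) c T)
      (t := fun b T => lact2 𝔽 (FreeAlgebra 𝔽 X) b T) ract2_one lact2_one
      (hBr.1 _) (hBr'.1 _) (h k)
  refine LinearMap.flip_inj (LinearMap.ext fun g => ?_)
  exact FreeAlgebra.linearMap_eq_of_leibniz (s := fun b T => star1r 𝔽 (FreeAlgebra 𝔽 X) b T)
    (t := fun a T => star1l 𝔽 (FreeAlgebra 𝔽 X) a T)
    star1r_one star1l_one (fun a b => hBr.2 a b g) (fun a b => hBr'.2 a b g)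
    (fun k => congr($(on_generators k) g))

end DoubleBracket

theorem statement_10_general (𝔽 : Type) [Field 𝔽] (ℓ : ℕ)
    (Br : FreeAlgebra 𝔽 (Fin ℓ) →ₗ[𝔽] FreeAlgebra 𝔽 (Fin ℓ) →ₗ[𝔽]
      FreeAlgebra 𝔽 (Fin ℓ) ⊗[𝔽] FreeAlgebra 𝔽 (Fin ℓ))
    (hBr : IsDoubleBracket 𝔽 (FreeAlgebra 𝔽 (Fin ℓ)) Br)
    (D : Fin ℓ → (FreeAlgebra 𝔽 (Fin ℓ) →ₗ[𝔽] FreeAlgebra 𝔽 (Fin ℓ) ⊗[𝔽] FreeAlgebra 𝔽 (Fin ℓ)))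
    (hD : ∀ i, Is2Deriv (D i))
    (hgen : ∀ i k, D i (FreeAlgebra.ι 𝔽 k) =
      if i = k then (1 : FreeAlgebra 𝔽 (Fin ℓ)) ⊗ₜ[𝔽] (1 : FreeAlgebra 𝔽 (Fin ℓ)) else 0)
    (f g : FreeAlgebra 𝔽 (Fin ℓ)) :
    Br f g = ∑ i : Fin ℓ, ∑ j : Fin ℓ,
      bullet 𝔽 (FreeAlgebra 𝔽 (Fin ℓ))
        (bullet 𝔽 (FreeAlgebra 𝔽 (Fin ℓ)) (D j g) (Br (FreeAlgebra.ι 𝔽 i) (FreeAlgebra.ι 𝔽 j)))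
        (swap2 𝔽 (FreeAlgebra 𝔽 (Fin ℓ)) (D i f)) := by
  have master := IsDoubleBracket.ext_freeAlgebra hBr (isDoubleBracket_masterBracket hD _)
    fun k l => (masterBracket_apply_apply_of_kronecker hgen
      (fun i j => Br (FreeAlgebra.ι 𝔽 i) (FreeAlgebra.ι 𝔽 j)) k l).symm
  exact congr($master f g)

/-- every 2-fold bracket on the free algebra `R_ℓ` is given by the
master formula `{{f,g}} = Σ_{i,j} (∂g/∂x_j) • {{x_i,x_j}} • ((∂f/∂x_i))^σ`. -/
theorem statement_10 (𝔽 : Type) [Field 𝔽] [CharZero 𝔽] (ℓ : ℕ)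
    (Br : FreeAlgebra 𝔽 (Fin ℓ) →ₗ[𝔽] FreeAlgebra 𝔽 (Fin ℓ) →ₗ[𝔽]
      FreeAlgebra 𝔽 (Fin ℓ) ⊗[𝔽] FreeAlgebra 𝔽 (Fin ℓ))
    (hBr : IsDoubleBracket 𝔽 (FreeAlgebra 𝔽 (Fin ℓ)) Br)
    (D : Fin ℓ → (FreeAlgebra 𝔽 (Fin ℓ) →ₗ[𝔽] FreeAlgebra 𝔽 (Fin ℓ) ⊗[𝔽] FreeAlgebra 𝔽 (Fin ℓ)))
    (hD : ∀ i, Is2Deriv (D i))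
    (hgen : ∀ i k, D i (FreeAlgebra.ι 𝔽 k) =
      if i = k then (1 : FreeAlgebra 𝔽 (Fin ℓ)) ⊗ₜ[𝔽] (1 : FreeAlgebra 𝔽 (Fin ℓ)) else 0)
    (f g : FreeAlgebra 𝔽 (Fin ℓ)) :
    Br f g = ∑ i : Fin ℓ, ∑ j : Fin ℓ,
      bullet 𝔽 (FreeAlgebra 𝔽 (Fin ℓ))
        (bullet 𝔽 (FreeAlgebra 𝔽 (Fin ℓ)) (D j g) (Br (FreeAlgebra.ι 𝔽 i) (FreeAlgebra.ι 𝔽 j)))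
        (swap2 𝔽 (FreeAlgebra 𝔽 (Fin ℓ)) (D i f)) :=
  statement_10_general 𝔽 ℓ Br hBr D hD hgen f g
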